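/- arXiv:1609.01782 — 3 statements merged into one kernel-verified Lean document; each statement's English description precedes it below -/
import Mathlib

section
/- For all n ≥ 1, the polytope P_n(123,132,231) is unimodularly equivalent to the standard simplex Δ_{n−1} = conv{e_1, …, e_n} ⊆ ℝ^n, where e_1, …, e_n are the standard basis vectors of ℝ^n. -/
open Pointwise

/-- `σ` contains the pattern `π`. -/
def containsPattern {n k : ℕ} (σ : Equiv.Perm (Fin n)) (π : Equiv.Perm (Fin k)) : Prop :=
  ∃ f : Fin k → Fin n, StrictMono f ∧ ∀ a b : Fin k, σ (f a) < σ (f b) ↔ π a < π b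

/-- The pattern 123. -/
def p123 : Equiv.Perm (Fin 3) := 1
/-- The pattern 132. -/
def p132 : Equiv.Perm (Fin 3) := Equiv.swap 1 2
/-- The pattern 231. -/
def p231 : Equiv.Perm (Fin 3) := finRotate 3

/-- The point `(σ(1), …, σ(n)) ∈ ℝ^n` (one-based values). -/
def permPoint {n : ℕ} (σ : Equiv.Perm (Fin n)) : Fin n → ℝ := fun i => ((σ i : ℕ) : ℝ) + 1

/-- The polytope `P_n(123,132,231)`. -/
def P123132231 (n : ℕ) : Set (Fin n → ℝ) :=
  convexHull ℝ (permPoint ''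
    {σ : Equiv.Perm (Fin n) |
      ¬ containsPattern σ p123 ∧ ¬ containsPattern σ p132 ∧ ¬ containsPattern σ p231})

/-- Unimodular equivalence of subsets of `ℝ^ι`. -/
def UnimodEquiv {ι : Type} [Fintype ι] [DecidableEq ι] (P Q : Set (ι → ℝ)) : Prop :=
  ∃ (A : Matrix ι ι ℤ) (b : ι → ℤ), (A.det = 1 ∨ A.det = -1) ∧
    Set.BijOn (fun x => (A.map (fun z : ℤ => (z : ℝ))).mulVec x + fun i => ((b i : ℝ))) P Q

/-!
A permutation avoids 123, 132 and 231 exactly when it is decreasing on its first `n - 1`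
positions, so there is one such permutation for each value `k` of its last entry, and it lists
`{0, …, n-1} \ {k}` decreasingly before it. Pad its 0-based values `σ 0, …, σ (n-2)` by `n` in
front and `-1` at the end: the `n` gaps between consecutive terms, each diminished by one, are
nonnegative and sum to `1`, and the only nonzero one sits at position `n - 1 - k`. All
permutation points lie on the hyperplane `∑ x = n(n+1)/2`, and there the gaps are the values of
an affine map whose matrix is integral, lower triangular with diagonal entries `±1`. It maps
`P_n(123,132,231)` onto the standard simplex.
-/

open Equiv

lemma unimodEquiv_convexHull_of_image {ι : Type} [Fintype ι] [DecidableEq ι] {A : Matrix ι ι ℤ}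
    (hA : A.det = 1 ∨ A.det = -1) (b : ι → ℤ) {S T : Set (ι → ℝ)}
    (hST : convexHull ℝ ((fun x => (A.map (fun z : ℤ => (z : ℝ))).mulVec x +
      fun i => (b i : ℝ)) '' S) = convexHull ℝ T) :
    UnimodEquiv (convexHull ℝ S) (convexHull ℝ T) := by
  set f : (ι → ℝ) →ᵃ[ℝ] (ι → ℝ) := (A.map (fun z : ℤ => (z : ℝ))).mulVecLin.toAffineMap +
    AffineMap.const ℝ _ fun i => (b i : ℝ)
  have hinj : Function.Injective f := by
    have hdet : IsUnit (A.map (fun z : ℤ => (z : ℝ))).det := by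
      have := (Int.isUnit_iff.mpr hA).map (Int.castRingHom ℝ)
      rwa [RingHom.map_det] at this
    exact (add_left_injective _).comp (Matrix.mulVec_injective_of_isUnit
      ((Matrix.isUnit_iff_isUnit_det _).mpr hdet))
  have himage : f '' convexHull ℝ S = convexHull ℝ T := by
    rw [AffineMap.image_convexHull]
    exact hST
  have hbij := hinj.injOn.bijOn_image (s := convexHull ℝ S)
  rw [himage] at hbij
  exact ⟨A, b, hA, hbij⟩

lemma convexHull_range_single_eq_stdSimplex {ι : Type*} [Fintype ι] [DecidableEq ι] :
    convexHull ℝ (Set.range fun i : ι => fun j : ι => if j = i then (1 : ℝ) else 0) =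
      stdSimplex ℝ ι := by
  convert convexHull_basis_eq_stdSimplex (R := ℝ) (ι := ι) using 5
  exact if_congr eq_comm rfl rfl

section Patterns

variable {n : ℕ}

def DecreasingExceptLast (σ : Perm (Fin n)) : Prop :=
  ∀ i j : Fin n, i < j → (j : ℕ) + 1 < n → σ j < σ i

lemma containsPattern_of_lt {k : ℕ} {σ : Perm (Fin n)} {π : Perm (Fin k)} {f : Fin k → Fin n}
    (hf : StrictMono f) (h : ∀ a b, a < b → (σ (f a) < σ (f b) ↔ π a < π b)) :
    containsPattern σ π := by
  refine ⟨f, hf, fun a b => ?_⟩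
  rcases lt_trichotomy a b with hab | rfl | hab
  · exact h a b hab
  · simp
  · have hσ : σ (f b) ≠ σ (f a) := (σ.injective.comp hf.injective).ne hab.ne
    have hπ : π b ≠ π a := π.injective.ne hab.ne
    rw [← not_iff_not, not_lt, not_lt, hσ.le_iff_lt, hπ.le_iff_lt]
    exact h b a hab

lemma containsPattern_of_three {σ : Perm (Fin n)} {π : Perm (Fin 3)} {i j k : Fin n}
    (hij : i < j) (hjk : j < k)
    (h01 : σ i < σ j ↔ π 0 < π 1) (h02 : σ i < σ k ↔ π 0 < π 2)
    (h12 : σ j < σ k ↔ π 1 < π 2) : containsPattern σ π := by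
  have hf : StrictMono ![i, j, k] := by
    intro a b hab
    fin_cases a <;> fin_cases b <;> simp_all [hij.trans hjk]
  refine containsPattern_of_lt hf fun a b hab => ?_
  fin_cases a <;> fin_cases b <;> simp_all

lemma not_containsPattern_of_decreasingExceptLast {σ : Perm (Fin n)} (hσ : DecreasingExceptLast σ)
    {π : Perm (Fin 3)} (hπ : π 0 < π 1) : ¬ containsPattern σ π := by
  rintro ⟨f, hf, hpat⟩
  have h12 : (f 1 : ℕ) < f 2 := hf (by decide : (1 : Fin 3) < 2)
  exact lt_asymm (hσ _ _ (hf (by decide)) (by omega)) ((hpat 0 1).2 hπ)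

lemma decreasingExceptLast_of_avoids {σ : Perm (Fin n)} (h123 : ¬ containsPattern σ p123)
    (h132 : ¬ containsPattern σ p132) (h231 : ¬ containsPattern σ p231) :
    DecreasingExceptLast σ := by
  -- an ascent `i < j < n - 1`, together with the last position, forms one of the three patterns
  intro i j hij hj
  by_contra! hle
  have hasc : σ i < σ j := hle.lt_of_ne (σ.injective.ne hij.ne)
  set m : Fin n := ⟨n - 1, by omega⟩
  have hjm : j < m := Fin.lt_def.mpr (by simp only [m]; omega)
  have hmi : σ m ≠ σ i := σ.injective.ne (hij.trans hjm).ne'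
  have hmj : σ m ≠ σ j := σ.injective.ne hjm.ne'
  rcases hmi.lt_or_gt with hmi | hmi
  · exact h231 (containsPattern_of_three hij hjm (iff_of_true hasc (by decide))
      (iff_of_false hmi.asymm (by decide)) (iff_of_false (hmi.trans hasc).asymm (by decide)))
  rcases hmj.lt_or_gt with hmj | hmj
  · exact h132 (containsPattern_of_three hij hjm (iff_of_true hasc (by decide))
      (iff_of_true hmi (by decide)) (iff_of_false hmj.asymm (by decide)))
  · exact h123 (containsPattern_of_three hij hjm (iff_of_true hasc (by decide))
      (iff_of_true hmi (by decide)) (iff_of_true hmj (by decide)))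

theorem avoids_iff_decreasingExceptLast (σ : Perm (Fin n)) :
    (¬ containsPattern σ p123 ∧ ¬ containsPattern σ p132 ∧ ¬ containsPattern σ p231) ↔
      DecreasingExceptLast σ :=
  ⟨fun ⟨h123, h132, h231⟩ => decreasingExceptLast_of_avoids h123 h132 h231, fun h =>
    ⟨not_containsPattern_of_decreasingExceptLast h (by decide),
      not_containsPattern_of_decreasingExceptLast h (by decide),
      not_containsPattern_of_decreasingExceptLast h (by decide)⟩⟩

end Patterns

section Gaps

variable {n : ℕ}

def paddedValues (σ : Perm (Fin n)) (m : ℕ) : ℤ :=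
  if m = 0 then n else if h : m < n then (σ ⟨m - 1, by omega⟩ : ℕ) else -1

def gapVector (σ : Perm (Fin n)) (i : Fin n) : ℤ :=
  paddedValues σ i - paddedValues σ (i + 1) - 1

/-- Row `i < n - 1` computes `x (i-1) - x i` (with `x (-1) := 0`); the last row computes
`x (n-2) + ∑ x`, which makes the matrix invertible and is harmless because `∑ x` is the same at
every permutation point. -/
def gapMatrix (n : ℕ) : Matrix (Fin n) (Fin n) ℤ :=
  Matrix.of fun i j =>
    (if (j : ℕ) + 1 = i then 1 else 0) + if (i : ℕ) + 1 = n then 1 else if i = j then -1 else 0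

def gapShift (n : ℕ) (i : Fin n) : ℤ :=
  (if (i : ℕ) = 0 then (n : ℤ) + 1 else 0) - 1 -
    if (i : ℕ) + 1 = n then ∑ j : Fin n, ((j : ℤ) + 1) else 0

lemma gapMatrix_isLowerTriangular : (gapMatrix n).IsLowerTriangular := by
  intro i j hij
  have : (i : ℕ) < j := hij
  simp only [gapMatrix, Matrix.of_apply]
  split_ifs <;> omega

lemma det_gapMatrix : (gapMatrix n).det = 1 ∨ (gapMatrix n).det = -1 := by
  rw [← Int.isUnit_iff, Matrix.det_of_isLowerTriangular _ gapMatrix_isLowerTriangular,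
    IsUnit.prod_univ_iff]
  intro i
  simp only [gapMatrix, Matrix.of_apply]
  split_ifs <;> first | omega | decide

lemma sum_ite_val_add_one_eq (x : Fin n → ℝ) (i : Fin n) :
    ∑ j : Fin n, (if (j : ℕ) + 1 = i then x j else 0) =
      if h : (i : ℕ) = 0 then 0 else x ⟨i - 1, by omega⟩ := by
  split_ifs with h
  · exact Finset.sum_eq_zero fun j _ => if_neg (by omega)
  · rw [Finset.sum_eq_single_of_mem ⟨i - 1, by omega⟩ (Finset.mem_univ _)]
    · exact if_pos (by dsimp only; omega)
    · intro j _ hj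
      exact if_neg fun h' => hj (Fin.ext (by dsimp only; omega))

lemma gapMatrix_mulVec_permPoint_add (σ : Perm (Fin n)) :
    ((gapMatrix n).map (fun z : ℤ => (z : ℝ))).mulVec (permPoint σ) +
      (fun i => (gapShift n i : ℝ)) =
      fun i => (gapVector σ i : ℝ) := by
  funext i
  have hsum : ∑ j : Fin n, permPoint σ j = ∑ j : Fin n, (((j : ℤ) + 1 : ℤ) : ℝ) := by
    push_cast
    exact Equiv.sum_comp σ fun j : Fin n => ((j : ℕ) : ℝ) + 1
  simp only [Pi.add_apply, Matrix.mulVec, dotProduct, Matrix.map_apply, gapMatrix,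
    Matrix.of_apply, Int.cast_add, add_mul, Finset.sum_add_distrib]
  have hdiag : ∑ j, ((if (i : ℕ) + 1 = n then 1 else if i = j then -1 else 0 : ℤ) : ℝ) *
      permPoint σ j = if (i : ℕ) + 1 = n then ∑ j, permPoint σ j else -permPoint σ i := by
    split_ifs <;> simp
  rw [hdiag, hsum]
  simp only [Int.cast_ite, Int.cast_one, Int.cast_zero, ite_mul, one_mul, zero_mul,
    sum_ite_val_add_one_eq]
  simp only [gapVector, paddedValues, gapShift, permPoint, Nat.add_sub_cancel, Fin.eta,
    Nat.add_one_ne_zero, if_false]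
  have hi := i.isLt
  split_ifs <;> push_cast <;> first | (exfalso; omega) | ring


lemma gapVector_nonneg {σ : Perm (Fin n)} (hσ : DecreasingExceptLast σ) (i : Fin n) :
    0 ≤ gapVector σ i := by
  have hi := i.isLt
  have hσi := (σ i).isLt
  simp only [gapVector, paddedValues, Nat.add_sub_cancel, Fin.eta, Nat.add_one_ne_zero, if_false]
  split_ifs with h0 h1 h2
  · omega
  · omega
  · have : σ i < σ ⟨i - 1, by omega⟩ := hσ _ _ (Fin.lt_def.mpr (by dsimp only; omega)) h2
    have : ((σ i : ℕ) : ℤ) < (σ ⟨i - 1, by omega⟩ : ℕ) := by exact_mod_cast this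
    omega
  · omega

lemma sum_gapVector (hn : n ≠ 0) (σ : Perm (Fin n)) : ∑ i, gapVector σ i = 1 := by
  simp only [gapVector]
  rw [Fin.sum_univ_eq_sum_range (fun m => paddedValues σ m - paddedValues σ (m + 1) - 1),
    Finset.sum_sub_distrib, Finset.sum_range_sub']
  simp [paddedValues, hn]

end Gaps

section Vertices

variable {n : ℕ}

noncomputable def vertexPerm (k : Fin n) : Perm (Fin n) :=
  Equiv.ofBijective
    (fun p => if (p : ℕ) + 1 = n then k else
      ⟨if (k : ℕ) < n - 1 - p then n - 1 - p else n - 2 - p, by split_ifs <;> omega⟩)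
    (Finite.injective_iff_bijective.mp fun p q hpq => by
      have := p.isLt; have := q.isLt; have := k.isLt
      have h := congrArg Fin.val hpq
      simp only [apply_ite Fin.val] at h
      ext
      split_ifs at h <;> omega)

lemma vertexPerm_val (k p : Fin n) :
    (vertexPerm k p : ℕ) =
      if (p : ℕ) + 1 = n then (k : ℕ)
      else if (k : ℕ) < n - 1 - p then n - 1 - p else n - 2 - p := by
  simp only [vertexPerm, Equiv.ofBijective_apply]
  split_ifs <;> rfl

lemma decreasingExceptLast_vertexPerm (k : Fin n) : DecreasingExceptLast (vertexPerm k) := by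
  intro i j hij hj
  have : (i : ℕ) < j := hij
  rw [Fin.lt_def, vertexPerm_val, vertexPerm_val]
  split_ifs <;> omega

lemma gapVector_vertexPerm_rev (i j : Fin n) :
    gapVector (vertexPerm i.rev) j = if j = i then 1 else 0 := by
  have := i.isLt
  have := j.isLt
  simp only [gapVector, paddedValues, Nat.add_sub_cancel, Fin.eta, Nat.add_one_ne_zero, if_false,
    vertexPerm_val, Fin.val_rev, Fin.ext_iff]
  split_ifs <;> omega

end Vertices

lemma convexHull_image_gapVector {n : ℕ} (hn : n ≠ 0) :
    convexHull ℝ ((fun σ i => (gapVector σ i : ℝ)) '' {σ : Perm (Fin n) | DecreasingExceptLast σ}) =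
      convexHull ℝ (Set.range fun i : Fin n => fun j : Fin n => if j = i then (1 : ℝ) else 0) := by
  rw [convexHull_range_single_eq_stdSimplex]
  apply (convexHull_min _ (convex_stdSimplex ℝ _)).antisymm
  · rw [← convexHull_range_single_eq_stdSimplex]
    refine convexHull_mono ?_
    rintro _ ⟨i, rfl⟩
    refine ⟨vertexPerm i.rev, decreasingExceptLast_vertexPerm _, ?_⟩
    funext j
    simp only [gapVector_vertexPerm_rev]
    push_cast
    rfl
  · rintro _ ⟨σ, hσ, rfl⟩
    refine ⟨fun i => Int.cast_nonneg_iff.mpr (gapVector_nonneg hσ i), ?_⟩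
    dsimp only
    exact_mod_cast sum_gapVector hn σ

theorem stmt8 (n : ℕ) (hn : 1 ≤ n) :
    UnimodEquiv (P123132231 n)
      (convexHull ℝ
        (Set.range fun i : Fin n => fun j : Fin n => if j = i then (1 : ℝ) else 0)) := by
  refine unimodEquiv_convexHull_of_image det_gapMatrix (gapShift n) ?_
  have hAv : {σ : Perm (Fin n) | ¬ containsPattern σ p123 ∧ ¬ containsPattern σ p132 ∧
      ¬ containsPattern σ p231} = {σ | DecreasingExceptLast σ} :=
    Set.ext avoids_iff_decreasingExceptLast
  rw [hAv, Set.image_image]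
  simp only [gapMatrix_mulVec_permPoint_add]
  exact convexHull_image_gapVector (by omega)
end

section
/- Fix n ≥ 1. For σ ∈ S_n let Des(σ) = {i ∈ {1,…,n−1} : σ(i) > σ(i+1)} be its descent set. On subsets of {1,…,n−1}, define S ⊑ T if and only if |S| ≤ |T| and, writing S = {s_1 > s_2 > ⋯ > s_{|S|}} and T = {t_1 > t_2 > ⋯ > t_{|T|}} in decreasing order, s_i ≤ t_i for all 1 ≤ i ≤ |S|. Then: (a) Des restricted to Av_n(132,312) is a bijection onto the set of all subsets of {1,…,n−1}; and (b) for all σ, τ ∈ Av_n(132,312), σ ≤_R τ in the right weak order if and only if Des(σ) ⊑ Des(τ). In particular, the right weak order restricted to Av_n(132,312) is a distributive lattice, order-isomorphic to the lattice M(n−1) of shifted Young diagrams with largest part at most n−1, and its cover relations are cover relations of the right weak order on S_n. -/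
/-- The pattern 312. -/
def p312 : Equiv.Perm (Fin 3) := (finRotate 3)⁻¹

/-- `Av_n(132,312)`. -/
def Av132312 (n : ℕ) : Set (Equiv.Perm (Fin n)) :=
  {σ : Equiv.Perm (Fin n) | ¬ containsPattern σ p132 ∧ ¬ containsPattern σ p312}

/-- The descent set of `σ`, in one-based positions: `{i ∈ {1,…,n-1} : σ(i) > σ(i+1)}`.
Here `σ` is zero-based, so `i` is a descent iff `σ(i-1) > σ(i)` (zero-based). -/
noncomputable def Des {n : ℕ} (σ : Equiv.Perm (Fin n)) : Finset ℕ :=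
  open scoped Classical in
  (Finset.Ico 1 n).filter fun i =>
    ∀ (h : i < n) (h' : i - 1 < n), σ ⟨i, h⟩ < σ ⟨i - 1, h'⟩

/-- `S ⊑ T` : writing `S` and `T` in decreasing order `s_1 > s_2 > ⋯` and `t_1 > t_2 > ⋯`,
we have `|S| ≤ |T|` and `s_i ≤ t_i` for all `i`. -/
def ShiftedLE (S T : Finset ℕ) : Prop :=
  S.card ≤ T.card ∧
    ∀ i < S.card, (S.sort (· ≥ ·)).getD i 0 ≤ (T.sort (· ≥ ·)).getD i 0

/-- The inversion value set of `σ`. -/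
def Invv {n : ℕ} (σ : Equiv.Perm (Fin n)) : Set (Fin n × Fin n) :=
  {p | ∃ i j : Fin n, i < j ∧ σ j < σ i ∧ p = (σ j, σ i)}

open Finset

/-!
A permutation avoids 132 and 312 exactly when each of its entries is a left-to-right maximum or a
left-to-right minimum. The minima sit precisely at the descents, so the descent set determines the
permutation, and every `S ⊆ {1, …, n-1}` occurs: put the value `#{t ∈ S | q < t}` at `q ∈ S` and
`q + #{t ∈ S | q < t}` at `q ∉ S`. Read as pairs of values, the inversions of this permutation form
the shifted Young diagram of the strict partition `S`, and containment of shifted diagrams is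
the dominance `⊑` of the sorted parts. Between two distinct nested shifted diagrams there is
always a third one with exactly one cell more than the smaller, so a cover in `Av_n(132,312)` adds
a single inversion and is therefore a cover of the whole weak order.
-/

section Counting

lemma card_filter_le_antitone (S : Finset ℕ) : Antitone fun d => #{t ∈ S | d ≤ t} :=
  fun _ _ h => card_le_card (monotone_filter_right S fun _ _ => h.trans)

lemma card_filter_le_eq_succ_add (S : Finset ℕ) (d : ℕ) :
    #{t ∈ S | d ≤ t} = #{t ∈ S | d + 1 ≤ t} + if d ∈ S then 1 else 0 := by
  split_ifs with hd
  · have : {t ∈ S | d ≤ t} = insert d {t ∈ S | d + 1 ≤ t} := by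
      ext t
      simp only [mem_filter, mem_insert]
      constructor
      · rintro ⟨ht, hdt⟩
        rcases hdt.eq_or_lt with rfl | h
        · exact Or.inl rfl
        · exact Or.inr ⟨ht, h⟩
      · rintro (rfl | ⟨ht, h⟩)
        · exact ⟨hd, le_rfl⟩
        · exact ⟨ht, by omega⟩
    rw [this, card_insert_of_notMem (by simp)]
  · congr 1
    refine filter_congr fun t ht => ?_
    have : t ≠ d := fun h => hd (h ▸ ht)
    omega

lemma le_of_card_filter_le_pos {S : Finset ℕ} {m d : ℕ} (hS : ∀ t ∈ S, t ≤ m)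
    (h : 0 < #{t ∈ S | d ≤ t}) : d ≤ m := by
  obtain ⟨t, ht⟩ := card_pos.mp h
  rw [mem_filter] at ht
  exact ht.2.trans (hS t ht.1)

lemma lt_card_filter_le_iff {S : Finset ℕ} {i d : ℕ} :
    i < #{t ∈ S | d ≤ t} ↔ i < #S ∧ d ≤ (S.sort (· ≥ ·)).getD i 0 := by
  set l := S.sort (· ≥ ·)
  have hl : StrictAnti l.get := sortedGT_sort S
  have hlen : l.length = #S := length_sort _
  set J : Finset (Fin l.length) := {j | d ≤ l.get j}
  have hcard : #{t ∈ S | d ≤ t} = #J := by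
    rw [← card_image_of_injective _ hl.injective]
    congr 1
    ext t
    simp only [J, mem_filter, mem_image, mem_univ, true_and]
    constructor
    · rintro ⟨ht, hdt⟩
      obtain ⟨j, rfl⟩ := List.mem_iff_get.mp ((mem_sort (· ≥ ·)).mpr ht)
      exact ⟨j, hdt, rfl⟩
    · rintro ⟨j, hj, rfl⟩
      exact ⟨(mem_sort (· ≥ ·)).mp (List.get_mem _ _), hj⟩
  rw [hcard]
  by_cases hil : i < l.length
  · rw [List.getD_eq_getElem _ _ hil]
    constructor
    · intro hi
      refine ⟨hlen ▸ hil, not_lt.mp fun hlt => ?_⟩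
      have hsub : J ⊆ Iio ⟨i, hil⟩ := fun j hj => by
        simp only [J, mem_filter, mem_univ, true_and] at hj
        exact mem_Iio.mpr (lt_of_not_ge fun hij => (hl.antitone hij).not_gt (hlt.trans_le hj))
      have := card_le_card hsub
      rw [Fin.card_Iio, Fin.val_mk] at this
      omega
    · rintro ⟨-, hd⟩
      have hsub : Iic ⟨i, hil⟩ ⊆ J := fun j hj => by
        simp only [J, mem_filter, mem_univ, true_and]
        exact hd.trans (hl.antitone (mem_Iic.mp hj))
      have := card_le_card hsub
      rw [Fin.card_Iic, Fin.val_mk] at this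
      omega
  · have := card_le_univ J
    simp only [Fintype.card_fin] at this
    omega

lemma shiftedLE_iff {S T : Finset ℕ} :
    ShiftedLE S T ↔ ∀ d, #{t ∈ S | d ≤ t} ≤ #{t ∈ T | d ≤ t} := by
  constructor
  · rintro ⟨hcard, hle⟩ d
    refine le_of_forall_lt fun i hi => ?_
    obtain ⟨hiS, hd⟩ := lt_card_filter_le_iff.mp hi
    exact lt_card_filter_le_iff.mpr ⟨hiS.trans_le hcard, hd.trans (hle i hiS)⟩
  · intro h
    refine ⟨by simpa using h 0, fun i hi => ?_⟩
    have hiS := lt_card_filter_le_iff.mpr ⟨hi, le_rfl⟩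
    exact (lt_card_filter_le_iff.mp (hiS.trans_le (h _))).2

lemma card_filter_le_insert_succ_erase {S : Finset ℕ} {x d : ℕ} (hx : x ∈ S ∨ x = 0)
    (hx1 : x + 1 ∉ S) (hd : 1 ≤ d) :
    #{t ∈ insert (x + 1) (S.erase x) | d ≤ t} = #{t ∈ S | d ≤ t} + if d = x + 1 then 1 else 0 := by
  rw [filter_insert, filter_erase]
  split_ifs with h1 h2 h2
  · rw [card_insert_of_notMem (by simp [hx1]),
      erase_eq_of_notMem fun h => by have := (mem_filter.mp h).2; omega]
  · have hxS : x ∈ S := hx.resolve_right (by omega)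
    rw [card_insert_of_notMem (by simp [hx1]), card_erase_of_mem (mem_filter.mpr ⟨hxS, by omega⟩)]
    have : 0 < #{t ∈ S | d ≤ t} := card_pos.mpr ⟨x, mem_filter.mpr ⟨hxS, by omega⟩⟩
    omega
  · omega
  · rw [erase_eq_of_notMem fun h => by have := (mem_filter.mp h).2; omega, add_zero]

lemma lt_of_subset_Icc {n : ℕ} {S : Finset ℕ} (hS : S ⊆ Icc 1 (n - 1)) : ∀ t ∈ S, t < n :=
  fun t ht => by
    have := mem_Icc.mp (hS ht)
    omega

lemma zero_notMem_of_subset_Icc {m : ℕ} {S : Finset ℕ} (hS : S ⊆ Icc 1 m) : 0 ∉ S :=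
  fun h => by simpa using hS h

end Counting

section ShiftedDiagram

/-- Row `a` occupies the columns `a + 1, …, a + sₐ`, where `s₀ > s₁ > ⋯` lists `S`. -/
def shiftedDiagram (S : Finset ℕ) : Set (ℕ × ℕ) :=
  {p | p.1 < p.2 ∧ p.1 < #{t ∈ S | p.2 - p.1 ≤ t}}

lemma shiftedDiagram_subset_iff {S T : Finset ℕ} :
    shiftedDiagram S ⊆ shiftedDiagram T ↔
      ∀ d, 1 ≤ d → #{t ∈ S | d ≤ t} ≤ #{t ∈ T | d ≤ t} := by
  constructor
  · intro h d hd
    refine le_of_forall_lt fun i hi => ?_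
    have hmem : (i, i + d) ∈ shiftedDiagram S := ⟨by simp only; omega, by simpa using hi⟩
    simpa using (h hmem).2
  · rintro h ⟨a, b⟩ ⟨hab, ha⟩
    exact ⟨hab, ha.trans_le (h _ (by simp only at hab ⊢; omega))⟩

lemma shiftedDiagram_subset_iff_shiftedLE {S T : Finset ℕ} (hS : 0 ∉ S) :
    shiftedDiagram S ⊆ shiftedDiagram T ↔ ShiftedLE S T := by
  rw [shiftedDiagram_subset_iff, shiftedLE_iff]
  refine ⟨fun h d => ?_, fun h d _ => h d⟩
  rcases Nat.eq_zero_or_pos d with rfl | hd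
  · calc #{t ∈ S | 0 ≤ t} = #{t ∈ S | 1 ≤ t} := by
          simpa [hS] using card_filter_le_eq_succ_add S 0
      _ ≤ #{t ∈ T | 1 ≤ t} := h 1 le_rfl
      _ ≤ #{t ∈ T | 0 ≤ t} := card_filter_le_antitone T (Nat.zero_le 1)
  · exact h d hd

lemma shiftedDiagram_subset_range {n : ℕ} {S : Finset ℕ} (hS : ∀ t ∈ S, t < n) :
    shiftedDiagram S ⊆ Set.range (Prod.map Fin.val Fin.val : Fin n × Fin n → ℕ × ℕ) := by
  rintro ⟨a, b⟩ ⟨hab, hcard⟩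
  have : #{t ∈ S | b - a ≤ t} ≤ #(Ico (b - a) n) := card_le_card fun t ht => by
    rw [mem_filter] at ht
    exact mem_Ico.mpr ⟨ht.2, hS t ht.1⟩
  rw [Nat.card_Ico] at this
  simp only at hab hcard
  exact ⟨(⟨a, by omega⟩, ⟨b, by omega⟩), rfl⟩

lemma eq_of_forall_card_filter_le_eq {S T : Finset ℕ} (hS : 0 ∉ S) (hT : 0 ∉ T)
    (h : ∀ d, 1 ≤ d → #{t ∈ S | d ≤ t} = #{t ∈ T | d ≤ t}) : S = T := by
  ext t
  rcases Nat.eq_zero_or_pos t with rfl | ht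
  · exact iff_of_false hS hT
  · have hS' := card_filter_le_eq_succ_add S t
    have hT' := card_filter_le_eq_succ_add T t
    have h0 := h t ht
    have h1 := h (t + 1) (by omega)
    split_ifs at hS' hT' with hs ht ht <;> simp only [hs, ht] <;> omega

lemma exists_succ_notMem_card_filter_le_lt {S T : Finset ℕ} {m : ℕ} (hS : 0 ∉ S)
    (hT : T ⊆ Icc 1 m) (hST : ∀ d, 1 ≤ d → #{t ∈ S | d ≤ t} ≤ #{t ∈ T | d ≤ t}) (hne : S ≠ T) :
    ∃ x, (x ∈ S ∨ x = 0) ∧ x + 1 ∉ S ∧ #{t ∈ S | x + 1 ≤ t} < #{t ∈ T | x + 1 ≤ t} := by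
  have hTm : ∀ t ∈ T, t ≤ m := fun t ht => (mem_Icc.mp (hT ht)).2
  set P := fun d => #{t ∈ S | d ≤ t} < #{t ∈ T | d ≤ t}
  obtain ⟨d, hd1, hd⟩ : ∃ d, 1 ≤ d ∧ P d := by
    by_contra! h
    exact hne (eq_of_forall_card_filter_le_eq hS (zero_notMem_of_subset_Icc hT) fun d hd =>
      le_antisymm (hST d hd) (not_lt.mp (h d hd)))
  -- For the largest `D` with `P D` and the largest `x ∈ S` below `D` (or `x = 0`), `S` has no
  -- element in `(x, D]`, so that `P (x + 1)` holds.
  set D := Nat.findGreatest P m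
  have hD : P D := Nat.findGreatest_spec (le_of_card_filter_le_pos hTm (Nat.zero_lt_of_lt hd)) hd
  have hD1 : 1 ≤ D :=
    hd1.trans (Nat.le_findGreatest (le_of_card_filter_le_pos hTm (Nat.zero_lt_of_lt hd)) hd)
  have hDS : D ∉ S := by
    have hD' : ¬ P (D + 1) := fun h => Nat.findGreatest_is_greatest (Nat.lt_succ_self D)
      (le_of_card_filter_le_pos hTm (Nat.zero_lt_of_lt h)) h
    have hS' := card_filter_le_eq_succ_add S D
    have hT' := card_filter_le_eq_succ_add T D
    have := hST (D + 1) (by omega)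
    simp only [P, not_lt] at hD hD'
    intro hmem
    split_ifs at hS' hT' <;> omega
  set x := (S.filter (· < D)).sup id
  have hxD : x < D :=
    (Finset.sup_lt_iff (by rw [Nat.bot_eq_zero]; omega)).mpr fun t ht => (mem_filter.mp ht).2
  have hle_x : ∀ t ∈ S, t < D → t ≤ x := fun t ht htD => le_sup (f := id) (mem_filter.mpr ⟨ht, htD⟩)
  have hx : x ∈ S ∨ x = 0 := by
    rcases (S.filter (· < D)).eq_empty_or_nonempty with h | h
    · exact Or.inr (by simp [x, h])
    · obtain ⟨y, hy, hyx⟩ := exists_mem_eq_sup _ h id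
      exact Or.inl (by rw [show x = y from hyx]; exact (mem_filter.mp hy).1)
  have hfilter : {t ∈ S | x + 1 ≤ t} = {t ∈ S | D ≤ t} := filter_congr fun t ht =>
    ⟨fun h => not_lt.mp fun htD => by have := hle_x t ht htD; omega, fun h => by omega⟩
  refine ⟨x, hx, fun hmem => ?_, ?_⟩
  · rcases (Nat.succ_le_of_lt hxD).lt_or_eq with h | h
    · have := hle_x _ hmem h; omega
    · exact hDS (h ▸ hmem)
  · rw [hfilter]
    exact hD.trans_le (card_filter_le_antitone T hxD)

lemma exists_shiftedDiagram_step {S T : Finset ℕ} {m : ℕ} (hS : S ⊆ Icc 1 m) (hT : T ⊆ Icc 1 m)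
    (hST : shiftedDiagram S ⊆ shiftedDiagram T) (hne : S ≠ T) :
    ∃ R ⊆ Icc 1 m, R ≠ S ∧ shiftedDiagram S ⊆ shiftedDiagram R ∧
      shiftedDiagram R ⊆ shiftedDiagram T ∧ (shiftedDiagram R \ shiftedDiagram S).Subsingleton := by
  rw [shiftedDiagram_subset_iff] at hST
  obtain ⟨x, hx, hx1, hlt⟩ :=
    exists_succ_notMem_card_filter_le_lt (zero_notMem_of_subset_Icc hS) hT hST hne
  have hR := fun d (hd : 1 ≤ d) => card_filter_le_insert_succ_erase hx hx1 hd
  refine ⟨insert (x + 1) (S.erase x), fun t ht => ?_, fun h => ?_, ?_, ?_, ?_⟩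
  · rcases mem_insert.mp ht with rfl | ht
    · exact mem_Icc.mpr ⟨by omega, le_of_card_filter_le_pos (fun t ht => (mem_Icc.mp (hT ht)).2)
        (Nat.zero_lt_of_lt hlt)⟩
    · exact hS (mem_of_mem_erase ht)
  · have := hR (x + 1) (by omega)
    rw [h] at this
    simp at this
  · rw [shiftedDiagram_subset_iff]
    intro d hd
    rw [hR d hd]
    omega
  · rw [shiftedDiagram_subset_iff]
    intro d hd
    rw [hR d hd]
    split_ifs with h
    · subst h; omega
    · exact hST d hd
  · have key : ∀ p ∈ shiftedDiagram (insert (x + 1) (S.erase x)) \ shiftedDiagram S,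
        p = (#{t ∈ S | x + 1 ≤ t}, #{t ∈ S | x + 1 ≤ t} + (x + 1)) := by
      rintro ⟨a, b⟩ ⟨⟨hab, ha⟩, hn⟩
      simp only [shiftedDiagram, Set.mem_ofPred_eq, not_and, not_lt] at ha hn hab
      rw [hR _ (by omega)] at ha
      have := hn hab
      split_ifs at ha with h
      · rw [h] at ha this
        ext <;> simp only <;> omega
      · omega
    exact fun p hp q hq => (key p hp).trans (key q hq).symm

end ShiftedDiagram

lemma Set.eq_or_eq_of_subset_of_diff_subsingleton {α : Type*} {s t u : Set α} (hsu : s ⊆ u)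
    (hut : u ⊆ t) (h : (t \ s).Subsingleton) : u = s ∨ u = t := by
  by_cases hus : u ⊆ s
  · exact Or.inl (hus.antisymm hsu)
  · obtain ⟨x, hxu, hxs⟩ := Set.not_subset.mp hus
    refine Or.inr (hut.antisymm fun y hy => ?_)
    by_cases hys : y ∈ s
    · exact hsu hys
    · rwa [h ⟨hy, hys⟩ ⟨hut hxu, hxs⟩]

section Perm

variable {n : ℕ}

lemma card_filter_apply_lt (σ : Equiv.Perm (Fin n)) (q : Fin n) : #{x | σ x < σ q} = σ q := by
  rw [card_equiv σ (t := Iio (σ q)) (by simp), Fin.card_Iio]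

lemma perm_eq_of_forall_lt_iff {σ τ : Equiv.Perm (Fin n)}
    (h : ∀ i j, i < j → (σ j < σ i ↔ τ j < τ i)) : σ = τ := by
  have key : ∀ x q, σ x < σ q ↔ τ x < τ q := by
    intro x q
    rcases lt_trichotomy x q with hxq | rfl | hqx
    · have := h x q hxq
      have := σ.injective.ne hxq.ne
      have := τ.injective.ne hxq.ne
      grind
    · simp
    · exact h q x hqx
  ext q
  rw [← card_filter_apply_lt σ, ← card_filter_apply_lt τ]
  simp only [key]

lemma mem_Invv_iff {σ : Equiv.Perm (Fin n)} {p : Fin n × Fin n} :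
    p ∈ Invv σ ↔ p.1 < p.2 ∧ σ⁻¹ p.2 < σ⁻¹ p.1 := by
  constructor
  · rintro ⟨i, j, hij, hlt, rfl⟩
    exact ⟨hlt, by simpa using hij⟩
  · rintro ⟨h1, h2⟩
    exact ⟨σ⁻¹ p.2, σ⁻¹ p.1, h2, by simpa using h1, by simp⟩

lemma mk_apply_mem_Invv_iff {σ : Equiv.Perm (Fin n)} {i j : Fin n} :
    (σ j, σ i) ∈ Invv σ ↔ σ j < σ i ∧ i < j := by
  simp [mem_Invv_iff]

lemma Invv_injective : Function.Injective (Invv : Equiv.Perm (Fin n) → Set (Fin n × Fin n)) := by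
  intro σ τ h
  refine inv_injective (perm_eq_of_forall_lt_iff fun a b hab => ?_)
  simpa [mem_Invv_iff, hab] using Set.ext_iff.mp h (a, b)

lemma mem_Des_iff {σ : Equiv.Perm (Fin n)} {j : Fin n} :
    (j : ℕ) ∈ Des σ ↔ ∃ i : Fin n, (i : ℕ) + 1 = j ∧ σ j < σ i := by
  simp only [Des, mem_filter, mem_Ico]
  constructor
  · rintro ⟨⟨h1, -⟩, h⟩
    exact ⟨⟨j - 1, by omega⟩, by simp only; omega, h j.2 _⟩
  · rintro ⟨i, hi, h⟩
    refine ⟨⟨by omega, j.2⟩, fun _ h' => ?_⟩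
    have : (⟨j - 1, h'⟩ : Fin n) = i := Fin.ext (by simp only; omega)
    rwa [this]

lemma Des_subset (σ : Equiv.Perm (Fin n)) : Des σ ⊆ Icc 1 (n - 1) := by
  intro i hi
  simp only [Des, mem_filter, mem_Ico] at hi
  exact mem_Icc.mpr ⟨hi.1.1, by omega⟩

def IsLRExtremal (σ : Equiv.Perm (Fin n)) : Prop :=
  ∀ k, (∀ i < k, σ i < σ k) ∨ (∀ i < k, σ k < σ i)

lemma IsLRExtremal.lt_iff_mem_Des {σ : Equiv.Perm (Fin n)} (hσ : IsLRExtremal σ) {i j : Fin n}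
    (hij : i < j) : σ j < σ i ↔ (j : ℕ) ∈ Des σ := by
  have hj : 1 ≤ (j : ℕ) := by rw [Fin.lt_def] at hij; omega
  rw [mem_Des_iff]
  constructor
  · intro h
    have hmin := (hσ j).resolve_left fun hmax => lt_asymm (hmax i hij) h
    exact ⟨⟨j - 1, by omega⟩, by simp only; omega, hmin _ (Fin.mk_lt_of_lt_val (by omega))⟩
  · rintro ⟨k, hk, h⟩
    exact (hσ j).resolve_left (fun hmax => lt_asymm (hmax k (Fin.lt_def.mpr (by omega))) h) i hij

lemma containsPattern_iff_strictMono {k : ℕ} {σ : Equiv.Perm (Fin n)} {π : Equiv.Perm (Fin k)} :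
    containsPattern σ π ↔ ∃ f : Fin k → Fin n, StrictMono f ∧ StrictMono (σ ∘ f ∘ π.symm) := by
  refine exists_congr fun f => and_congr_right fun _ => ⟨fun h a b hab => ?_, fun h a b => ?_⟩
  · exact (h _ _).mpr (by simpa using hab)
  · simpa using h.lt_iff_lt (a := π a) (b := π b)

lemma containsPattern_p132_iff {σ : Equiv.Perm (Fin n)} :
    containsPattern σ p132 ↔ ∃ i j k, i < j ∧ j < k ∧ σ i < σ k ∧ σ k < σ j := by
  have hπ : ∀ a, p132.symm a = ![0, 2, 1] a := by decide
  simp only [containsPattern_iff_strictMono, Fin.strictMono_iff_lt_succ, Fin.forall_fin_two]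
  constructor
  · rintro ⟨f, hf, hσ⟩
    exact ⟨f 0, f 1, f 2, hf.1, hf.2, by simpa [hπ] using hσ⟩
  · rintro ⟨i, j, k, hij, hjk, h1, h2⟩
    exact ⟨![i, j, k], by simpa using ⟨hij, hjk⟩, by simpa [hπ] using ⟨h1, h2⟩⟩

lemma containsPattern_p312_iff {σ : Equiv.Perm (Fin n)} :
    containsPattern σ p312 ↔ ∃ i j k, i < j ∧ j < k ∧ σ j < σ k ∧ σ k < σ i := by
  have hπ : ∀ a, p312.symm a = ![1, 2, 0] a := by decide
  simp only [containsPattern_iff_strictMono, Fin.strictMono_iff_lt_succ, Fin.forall_fin_two]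
  constructor
  · rintro ⟨f, hf, hσ⟩
    exact ⟨f 0, f 1, f 2, hf.1, hf.2, by simpa [hπ] using hσ⟩
  · rintro ⟨i, j, k, hij, hjk, h1, h2⟩
    exact ⟨![i, j, k], by simpa using ⟨hij, hjk⟩, by simpa [hπ] using ⟨h1, h2⟩⟩

lemma mem_Av132312_iff {σ : Equiv.Perm (Fin n)} : σ ∈ Av132312 n ↔ IsLRExtremal σ := by
  simp only [Av132312, Set.mem_ofPred_eq, containsPattern_p132_iff, containsPattern_p312_iff]
  constructor
  · rintro ⟨h132, h312⟩ k
    by_contra! hk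
    obtain ⟨⟨i, hik, hi⟩, ⟨j, hjk, hj⟩⟩ := hk
    have hi' : σ k < σ i := hi.lt_of_ne (σ.injective.ne hik.ne')
    have hj' : σ j < σ k := hj.lt_of_ne (σ.injective.ne hjk.ne)
    rcases lt_trichotomy i j with hij | rfl | hji
    · exact h312 ⟨i, j, k, hij, hjk, hj', hi'⟩
    · exact lt_asymm hi' hj'
    · exact h132 ⟨j, i, k, hji, hik, hj', hi'⟩
  · intro hσ
    refine ⟨fun ⟨i, j, k, hij, hjk, h1, h2⟩ => ?_, fun ⟨i, j, k, hij, hjk, h1, h2⟩ => ?_⟩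
    · rcases hσ k with h | h
      · exact lt_asymm (h j hjk) h2
      · exact lt_asymm (h i (hij.trans hjk)) h1
    · rcases hσ k with h | h
      · exact lt_asymm (h i (hij.trans hjk)) h2
      · exact lt_asymm (h j hjk) h1

end Perm

section OfDescentsFun

variable {S : Finset ℕ}

/-- Positions in `S` become left-to-right minima, the others left-to-right maxima. -/
def ofDescentsFun (S : Finset ℕ) (q : ℕ) : ℕ :=
  #{t ∈ S | q < t} + if q ∈ S then 0 else q

lemma monotone_card_filter_lt_add (S : Finset ℕ) : Monotone fun q => #{t ∈ S | q < t} + q :=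
  monotone_nat_of_le_succ fun q => by
    have : #{t ∈ S | q < t} ≤ #{t ∈ S | q + 1 < t} + 1 :=
      calc #{t ∈ S | q < t} ≤ #(insert (q + 1) {t ∈ S | q + 1 < t}) := card_le_card fun t ht => by
            rw [mem_filter] at ht
            rcases (Nat.succ_le_of_lt ht.2).eq_or_lt with h | h
            · exact mem_insert.mpr (Or.inl h.symm)
            · exact mem_insert_of_mem (mem_filter.mpr ⟨ht.1, h⟩)
        _ ≤ _ := card_insert_le _ _
    show #{t ∈ S | q < t} + q ≤ #{t ∈ S | q + 1 < t} + (q + 1)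
    omega

lemma card_filter_lt_add_lt_of_notMem {q q' : ℕ} (hq : q < q') (h : q' ∉ S) :
    #{t ∈ S | q < t} + q < #{t ∈ S | q' < t} + q' := by
  have h1 := monotone_card_filter_lt_add S (Nat.le_sub_one_of_lt hq)
  have h2 : #{t ∈ S | q' - 1 < t} ≤ #{t ∈ S | q' < t} := card_le_card fun t ht => by
    simp only [mem_filter] at ht ⊢
    exact ⟨ht.1, lt_of_le_of_ne (by omega) fun e => h (e ▸ ht.1)⟩
  simp only at h1
  omega

lemma card_filter_lt_lt_of_mem {q q' : ℕ} (hq : q < q') (h : q' ∈ S) :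
    #{t ∈ S | q' < t} < #{t ∈ S | q < t} :=
  card_lt_card ((ssubset_iff_of_subset (monotone_filter_right S fun _ _ ht => hq.trans ht)).mpr
    ⟨q', by simp [h, hq], by simp⟩)

lemma ofDescentsFun_lt_of_mem {q q' : ℕ} (hq : q < q') (h : q' ∈ S) :
    ofDescentsFun S q' < ofDescentsFun S q := by
  have := card_filter_lt_lt_of_mem hq h
  unfold ofDescentsFun
  split_ifs <;> omega

lemma ofDescentsFun_lt_of_notMem {q q' : ℕ} (hq : q < q') (h : q' ∉ S) :
    ofDescentsFun S q < ofDescentsFun S q' := by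
  have := card_filter_lt_add_lt_of_notMem hq h
  unfold ofDescentsFun
  split_ifs <;> omega

lemma ofDescentsFun_lt_iff {q q' : ℕ} (hq : q < q') :
    ofDescentsFun S q' < ofDescentsFun S q ↔ q' ∈ S :=
  ⟨fun h => by_contra fun h' => lt_asymm h (ofDescentsFun_lt_of_notMem hq h'),
    ofDescentsFun_lt_of_mem hq⟩

lemma ofDescentsFun_injective (S : Finset ℕ) : Function.Injective (ofDescentsFun S) :=
  Function.Injective.of_lt_imp_ne fun q q' hq => by
    by_cases h : q' ∈ S
    · exact (ofDescentsFun_lt_of_mem hq h).ne'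
    · exact (ofDescentsFun_lt_of_notMem hq h).ne

lemma ofDescentsFun_lt {n q : ℕ} (hS : ∀ t ∈ S, t < n) (hq : q < n) : ofDescentsFun S q < n := by
  have : #{t ∈ S | q < t} ≤ #(Ioo q n) :=
    card_le_card fun t ht => by rw [mem_filter] at ht; exact mem_Ioo.mpr ⟨ht.2, hS t ht.1⟩
  rw [Nat.card_Ioo] at this
  unfold ofDescentsFun
  split_ifs <;> omega

lemma card_le_ofDescentsFun_of_notMem {q : ℕ} (h : q ∉ S) : #S ≤ ofDescentsFun S q := by
  have : S ⊆ {t ∈ S | q < t} ∪ range q := fun t ht => by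
    rcases lt_or_gt_of_ne (fun e : t = q => h (e ▸ ht)) with htq | htq
    · exact mem_union_right _ (mem_range.mpr htq)
    · exact mem_union_left _ (mem_filter.mpr ⟨ht, htq⟩)
  have := (card_le_card this).trans (card_union_le _ _)
  rw [card_range] at this
  simpa [ofDescentsFun, h] using this

lemma ofDescentsFun_mem_shiftedDiagram_iff {i j : ℕ} :
    (ofDescentsFun S j, ofDescentsFun S i) ∈ shiftedDiagram S ↔ i < j ∧ j ∈ S := by
  simp only [shiftedDiagram, Set.mem_ofPred_eq]
  constructor
  · rintro ⟨hlt, hcard⟩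
    have hj : j ∈ S := by_contra fun hj =>
      (hcard.trans_le (card_filter_le _ _)).not_ge (card_le_ofDescentsFun_of_notMem hj)
    have hfj : ofDescentsFun S j = #{t ∈ S | j < t} := by simp [ofDescentsFun, hj]
    refine ⟨lt_of_not_ge fun hji => ?_, hj⟩
    rcases hji.lt_or_eq with hji | rfl
    · by_cases hi : i ∈ S
      · exact lt_asymm hlt (ofDescentsFun_lt_of_mem hji hi)
      · have hfi : ofDescentsFun S i = #{t ∈ S | i < t} + i := by simp [ofDescentsFun, hi]
        have := card_filter_lt_add_lt_of_notMem hji hi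
        have : #{t ∈ S | ofDescentsFun S i - ofDescentsFun S j ≤ t} ≤ #{t ∈ S | j < t} :=
          card_le_card <| monotone_filter_right S fun t _ ht => by omega
        omega
    · exact lt_irrefl _ hlt
  · rintro ⟨hij, hj⟩
    have hfj : ofDescentsFun S j = #{t ∈ S | j < t} := by simp [ofDescentsFun, hj]
    have hfi : ofDescentsFun S i ≤ #{t ∈ S | i < t} + i := by
      unfold ofDescentsFun; split_ifs <;> omega
    have := monotone_card_filter_lt_add S hij.le
    simp only at this
    refine ⟨ofDescentsFun_lt_of_mem hij hj, hfj ▸ card_lt_card ?_⟩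
    refine (ssubset_iff_of_subset (monotone_filter_right S fun t _ ht => ?_)).mpr
      ⟨j, mem_filter.mpr ⟨hj, by omega⟩, by simp⟩
    omega

end OfDescentsFun

section OfDescents

variable {n : ℕ} {S : Finset ℕ} (hS : ∀ t ∈ S, t < n)

noncomputable def ofDescents (n : ℕ) (S : Finset ℕ) (hS : ∀ t ∈ S, t < n) : Equiv.Perm (Fin n) :=
  Equiv.ofBijective (fun q => ⟨ofDescentsFun S q, ofDescentsFun_lt hS q.2⟩)
    (Finite.injective_iff_bijective.mp fun _ _ h =>
      Fin.ext (ofDescentsFun_injective S (Fin.mk.inj_iff.mp h)))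

lemma ofDescents_apply (q : Fin n) : (ofDescents n S hS q : ℕ) = ofDescentsFun S q := rfl

lemma ofDescents_lt_iff {i j : Fin n} (hij : i < j) :
    ofDescents n S hS j < ofDescents n S hS i ↔ (j : ℕ) ∈ S := by
  rw [Fin.lt_def, ofDescents_apply, ofDescents_apply]
  exact ofDescentsFun_lt_iff hij

lemma isLRExtremal_ofDescents : IsLRExtremal (ofDescents n S hS) := fun k => by
  by_cases hk : (k : ℕ) ∈ S
  · exact Or.inr fun i hi => (ofDescents_lt_iff hS hi).mpr hk
  · exact Or.inl fun i hi => (not_lt.mp (mt (ofDescents_lt_iff hS hi).mp hk)).lt_of_ne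
      ((ofDescents n S hS).injective.ne hi.ne)

lemma ofDescents_mem_Av132312 : ofDescents n S hS ∈ Av132312 n :=
  mem_Av132312_iff.mpr (isLRExtremal_ofDescents hS)

lemma Des_ofDescents (h0 : 0 ∉ S) : Des (ofDescents n S hS) = S := by
  ext j
  by_cases hj : 1 ≤ j ∧ j < n
  · have hlt : (⟨j - 1, by omega⟩ : Fin n) < ⟨j, hj.2⟩ := Fin.mk_lt_mk.mpr (by omega)
    exact ((isLRExtremal_ofDescents hS).lt_iff_mem_Des hlt).symm.trans (ofDescents_lt_iff hS hlt)
  · refine iff_of_false (fun h => hj ?_) (fun h => hj ⟨?_, hS j h⟩)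
    · have := mem_Icc.mp (Des_subset _ h)
      omega
    · exact Nat.pos_of_ne_zero (by rintro rfl; exact h0 h)

lemma Invv_ofDescents :
    Invv (ofDescents n S hS) = Prod.map Fin.val Fin.val ⁻¹' shiftedDiagram S := by
  ext ⟨a, b⟩
  obtain ⟨j, rfl⟩ := (ofDescents n S hS).surjective a
  obtain ⟨i, rfl⟩ := (ofDescents n S hS).surjective b
  rw [Set.mem_preimage, Prod.map_apply, ofDescents_apply, ofDescents_apply,
    ofDescentsFun_mem_shiftedDiagram_iff, mk_apply_mem_Invv_iff, ← Fin.lt_def]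
  exact ⟨fun ⟨h, hij⟩ => ⟨hij, (ofDescents_lt_iff hS hij).mp h⟩,
    fun ⟨hij, hj⟩ => ⟨(ofDescents_lt_iff hS hij).mpr hj, hij⟩⟩

end OfDescents

section Av132312

variable {n : ℕ}

lemma Des_injOn : Set.InjOn Des (Av132312 n) := fun σ hσ τ hτ h =>
  perm_eq_of_forall_lt_iff fun i j hij => by
    rw [(mem_Av132312_iff.mp hσ).lt_iff_mem_Des hij, (mem_Av132312_iff.mp hτ).lt_iff_mem_Des hij, h]

lemma Invv_eq_preimage_shiftedDiagram {σ : Equiv.Perm (Fin n)} (hσ : σ ∈ Av132312 n) :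
    Invv σ = Prod.map Fin.val Fin.val ⁻¹' shiftedDiagram (Des σ) := by
  rw [← Invv_ofDescents (lt_of_subset_Icc (Des_subset _))]
  exact congrArg Invv (Des_injOn hσ (ofDescents_mem_Av132312 _)
    (Des_ofDescents _ (zero_notMem_of_subset_Icc (Des_subset σ))).symm)

lemma Invv_subset_Invv_iff {σ τ : Equiv.Perm (Fin n)} (hσ : σ ∈ Av132312 n)
    (hτ : τ ∈ Av132312 n) : Invv σ ⊆ Invv τ ↔ shiftedDiagram (Des σ) ⊆ shiftedDiagram (Des τ) := by
  rw [Invv_eq_preimage_shiftedDiagram hσ, Invv_eq_preimage_shiftedDiagram hτ,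
    Set.preimage_subset_preimage_iff
      (shiftedDiagram_subset_range (lt_of_subset_Icc (Des_subset _)))]

lemma Invv_diff_subsingleton_of_covBy {σ τ : Equiv.Perm (Fin n)} (hσ : σ ∈ Av132312 n)
    (hτ : τ ∈ Av132312 n) (hστ : Invv σ ⊆ Invv τ) (hne : σ ≠ τ)
    (hcov : ∀ γ ∈ Av132312 n, Invv σ ⊆ Invv γ → Invv γ ⊆ Invv τ → γ = σ ∨ γ = τ) :
    (Invv τ \ Invv σ).Subsingleton := by
  rw [Invv_subset_Invv_iff hσ hτ] at hστ
  obtain ⟨R, hR, hRS, hSR, hRT, hsub⟩ := exists_shiftedDiagram_step (Des_subset σ) (Des_subset τ)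
    hστ fun h => hne (Des_injOn hσ hτ h)
  have hρ := ofDescents_mem_Av132312 (lt_of_subset_Icc hR)
  have hDesρ := Des_ofDescents (lt_of_subset_Icc hR) (zero_notMem_of_subset_Icc hR)
  rcases hcov _ hρ ((Invv_subset_Invv_iff hσ hρ).mpr (by rwa [hDesρ]))
      ((Invv_subset_Invv_iff hρ hτ).mpr (by rwa [hDesρ])) with h | h
  · exact absurd (hDesρ.symm.trans (congrArg Des h)) hRS
  · rw [← h, Invv_ofDescents, Invv_eq_preimage_shiftedDiagram hσ, ← Set.preimage_sdiff]
    exact hsub.preimage (Fin.val_injective.prodMap Fin.val_injective)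

end Av132312

theorem stmt13_general (n : ℕ) :
    -- (a) `Des` is a bijection from `Av_n(132,312)` onto all subsets of `{1,…,n-1}`
    Set.BijOn Des (Av132312 n) {S : Finset ℕ | S ⊆ Finset.Icc 1 (n - 1)} ∧
    -- (b) right weak order corresponds to `⊑` of descent sets
    (∀ σ ∈ Av132312 n, ∀ τ ∈ Av132312 n,
      (Invv σ ⊆ Invv τ ↔ ShiftedLE (Des σ) (Des τ))) ∧
    -- covers in the restricted poset are covers in the right weak order on `S_n`
    (∀ σ ∈ Av132312 n, ∀ τ ∈ Av132312 n,
      (Invv σ ⊆ Invv τ ∧ σ ≠ τ ∧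
        ∀ γ ∈ Av132312 n, Invv σ ⊆ Invv γ → Invv γ ⊆ Invv τ → γ = σ ∨ γ = τ) →
      ∀ γ : Equiv.Perm (Fin n), Invv σ ⊆ Invv γ → Invv γ ⊆ Invv τ → γ = σ ∨ γ = τ) := by
  refine ⟨⟨fun σ _ => Des_subset σ, Des_injOn, fun S hS => ?_⟩, fun σ hσ τ hτ => ?_, ?_⟩
  · exact ⟨ofDescents n S (lt_of_subset_Icc hS), ofDescents_mem_Av132312 _,
      Des_ofDescents _ (zero_notMem_of_subset_Icc hS)⟩
  · rw [Invv_subset_Invv_iff hσ hτ,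
      shiftedDiagram_subset_iff_shiftedLE (zero_notMem_of_subset_Icc (Des_subset σ))]
  · rintro σ hσ τ hτ ⟨hστ, hne, hcov⟩ γ hσγ hγτ
    have hdiff := Invv_diff_subsingleton_of_covBy hσ hτ hστ hne hcov
    exact (Set.eq_or_eq_of_subset_of_diff_subsingleton hσγ hγτ hdiff).imp
      (fun h => Invv_injective h) (fun h => Invv_injective h)

theorem stmt13 (n : ℕ) (hn : 1 ≤ n) :
    -- (a) `Des` is a bijection from `Av_n(132,312)` onto all subsets of `{1,…,n-1}`
    Set.BijOn Des (Av132312 n) {S : Finset ℕ | S ⊆ Finset.Icc 1 (n - 1)} ∧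
    -- (b) right weak order corresponds to `⊑` of descent sets
    (∀ σ ∈ Av132312 n, ∀ τ ∈ Av132312 n,
      (Invv σ ⊆ Invv τ ↔ ShiftedLE (Des σ) (Des τ))) ∧
    -- covers in the restricted poset are covers in the right weak order on `S_n`
    (∀ σ ∈ Av132312 n, ∀ τ ∈ Av132312 n,
      (Invv σ ⊆ Invv τ ∧ σ ≠ τ ∧
        ∀ γ ∈ Av132312 n, Invv σ ⊆ Invv γ → Invv γ ⊆ Invv τ → γ = σ ∨ γ = τ) →
      ∀ γ : Equiv.Perm (Fin n), Invv σ ⊆ Invv γ → Invv γ ⊆ Invv τ → γ = σ ∨ γ = τ) :=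
  stmt13_general n
end

section
/- Let σ, τ ∈ S_n satisfy either Inv(σ) ⊆ Inv(τ) (i.e. σ ≤ τ in the left weak order) or Invv(σ) ⊆ Invv(τ) (i.e. σ ≤ τ in the right weak order). Then for every 1 ≤ i ≤ n, min{σ(1), σ(2), …, σ(i)} ≤ min{τ(1), τ(2), …, τ(i)}. -/
/-- The inversion (position) set of `σ`. -/
def InvSet {n : ℕ} (σ : Equiv.Perm (Fin n)) : Set (Fin n × Fin n) :=
  {p | p.1 < p.2 ∧ σ p.2 < σ p.1}

open Finset

theorem lt_of_apply_lt_inf'_Iic {α β : Type*} [LinearOrder α] [LocallyFiniteOrderBot α]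
    [LinearOrder β] {f : α → β} {i p : α}
    (h : f p < (Iic i).inf' nonempty_Iic f) : i < p :=
  not_le.1 fun hp => (inf'_le f (mem_Iic.2 hp)).not_gt h

theorem card_le_of_injOn_of_lt {n : ℕ} {s : Finset (Fin n)} {f : Fin n → Fin n} {b : Fin n}
    (hf : Set.InjOn f s) (h : ∀ x ∈ s, f x < b) : #s ≤ b := by
  simpa using card_le_card_of_injOn f (fun x hx => mem_Iio.2 (h x hx)) hf

theorem invv_eq_invSet_inv {n : ℕ} (σ : Equiv.Perm (Fin n)) : Invv σ = InvSet σ⁻¹ := by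
  ext ⟨a, b⟩
  constructor
  · rintro ⟨i, j, hij, hji, hp⟩
    simp only [Prod.mk.injEq] at hp
    obtain ⟨rfl, rfl⟩ := hp
    exact ⟨hji, by simpa using hij⟩
  · rintro ⟨hab, hba⟩
    exact ⟨σ⁻¹ b, σ⁻¹ a, hba, by simpa using hab, by simp⟩

section PrefixMin

variable {n : ℕ} {σ τ : Equiv.Perm (Fin n)}

/- Let `m` be the prefix minimum of `σ` and `q ≤ i` a position where `τ` attains its own.
Each value `w < m` sits in `σ` at a position `p > i ≥ q` with `σ p < σ q`, so `τ p < τ q`: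
the `m` distinct values `τ p` all lie below `τ q`. -/
theorem inf'_Iic_le_of_invSet_subset (h : InvSet σ ⊆ InvSet τ) (i : Fin n) :
    (Iic i).inf' nonempty_Iic (fun j => σ j) ≤ (Iic i).inf' nonempty_Iic (fun j => τ j) := by
  set m := (Iic i).inf' nonempty_Iic (fun j => σ j)
  obtain ⟨q, hq, hτq⟩ := exists_mem_eq_inf' nonempty_Iic (fun j => τ j)
  rw [hτq]
  have hτ_lt : ∀ w ∈ Iio m, τ (σ⁻¹ w) < τ q := by
    intro w hw
    have hp : i < σ⁻¹ w := lt_of_apply_lt_inf'_Iic (f := fun j => σ j) <| by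
      simpa only [Equiv.Perm.coe_inv, Equiv.apply_symm_apply] using mem_Iio.1 hw
    have hinv : (q, σ⁻¹ w) ∈ InvSet σ :=
      ⟨(mem_Iic.1 hq).trans_lt hp, by simpa using (mem_Iio.1 hw).trans_le (inf'_le _ hq)⟩
    exact (h hinv).2
  have hcard := card_le_of_injOn_of_lt (τ.injective.comp σ⁻¹.injective).injOn hτ_lt
  rw [Fin.card_Iio] at hcard
  exact Fin.le_def.2 hcard

/- If some `τ q` with `q ≤ i` were below the prefix minimum of `σ`, each value `σ j` with
`j ≤ i` would form a value inversion of `σ` with `τ q`, hence of `τ`: the `i + 1` positions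
`τ⁻¹ (σ j)` would all lie before `q ≤ i`. -/
theorem inf'_Iic_le_of_invSet_inv_subset (h : InvSet σ⁻¹ ⊆ InvSet τ⁻¹) (i : Fin n) :
    (Iic i).inf' nonempty_Iic (fun j => σ j) ≤ (Iic i).inf' nonempty_Iic (fun j => τ j) := by
  obtain ⟨q, hq, hτq⟩ := exists_mem_eq_inf' nonempty_Iic (fun j => τ j)
  rw [hτq]
  by_contra! hlt
  have hσq : i < σ⁻¹ (τ q) := lt_of_apply_lt_inf'_Iic (f := fun j => σ j) (by simpa using hlt)
  have hpos_lt : ∀ j ∈ Iic i, τ⁻¹ (σ j) < q := by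
    intro j hj
    have hinv : (τ q, σ j) ∈ InvSet σ⁻¹ :=
      ⟨hlt.trans_le (inf'_le _ hj), by simpa using (mem_Iic.1 hj).trans_lt hσq⟩
    simpa using (h hinv).2
  have hcard := card_le_of_injOn_of_lt (τ⁻¹.injective.comp σ.injective).injOn hpos_lt
  have hqi : (q : ℕ) ≤ i := Fin.le_def.1 (mem_Iic.1 hq)
  simp only [Fin.card_Iic] at hcard
  omega

end PrefixMin

theorem stmt15 (n : ℕ) (σ τ : Equiv.Perm (Fin n))
    (h : InvSet σ ⊆ InvSet τ ∨ Invv σ ⊆ Invv τ) (i : Fin n) :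
    (Finset.Iic i).inf' Finset.nonempty_Iic (fun j => σ j) ≤
      (Finset.Iic i).inf' Finset.nonempty_Iic (fun j => τ j) := by
  rcases h with hL | hR
  · exact inf'_Iic_le_of_invSet_subset hL i
  · rw [invv_eq_invSet_inv, invv_eq_invSet_inv] at hR
    exact inf'_Iic_le_of_invSet_inv_subset hR i
end
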